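/- arXiv:2502.16132 — 5 statements merged into one kernel-verified Lean document; each statement's English description precedes it below -/
import Mathlib

section
/- The sequence P_m = ∏_{i=4}^{m} (2^i − 2i − 1)/(2^i − 1), defined for m ≥ 4, is strictly decreasing and converges as m → ∞ to a limit L satisfying 0.19 < L < 0.20. -/
/-- The coding rate of the interleaved concatenation `H_m ⊗ H_{m-1} ⊗ ⋯ ⊗ H_4`
of distinct quantum Hamming codes: `P m = ∏_{i=4}^{m} (2^i - 2i - 1)/(2^i - 1)`. -/
noncomputable def hammingTowerRate (m : ℕ) : ℝ :=
  ∏ i ∈ Finset.Icc 4 m, ((2 : ℝ) ^ i - 2 * i - 1) / ((2 : ℝ) ^ i - 1)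

/-!
Each factor is `1 - 2i/(2^i - 1) ∈ (0, 1)`, so `P` is a strictly decreasing sequence of positive
reals and converges to its infimum `L`. The upper bound is `L ≤ P 11 < 0.20`. For the lower bound,
the Weierstrass inequality `∏ (1 - aᵢ) ≥ 1 - ∑ aᵢ` with `2i/(2^i - 1) ≤ 4i/2^i` and
`∑_{i>n} i/2^i = (n + 2)/2^n` gives `P m ≥ P n (1 - 4(n + 2)/2^n)` for all `m`, and at `n = 12`
the right-hand side exceeds `0.19`.
-/

open Finset

theorem Finset.one_sub_sum_le_prod_one_sub {ι R : Type*} [CommRing R] [LinearOrder R]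
    [IsStrictOrderedRing R] (s : Finset ι) (f : ι → R) (h0 : ∀ i ∈ s, 0 ≤ f i)
    (h1 : ∀ i ∈ s, f i ≤ 1) : 1 - ∑ i ∈ s, f i ≤ ∏ i ∈ s, (1 - f i) := by
  induction s using Finset.cons_induction with
  | empty => simp
  | cons a s _ ih =>
    simp only [forall_mem_cons] at h0 h1
    rw [prod_cons, sum_cons]
    have hs := ih h0.2 h1.2
    have hsum : 0 ≤ ∑ i ∈ s, f i := sum_nonneg h0.2
    nlinarith [mul_le_mul_of_nonneg_left hs (sub_nonneg.2 h1.1), mul_nonneg h0.1 hsum]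

theorem sum_Ioc_natCast_div_two_pow {n m : ℕ} (h : n ≤ m) :
    ∑ i ∈ Ioc n m, (i : ℝ) / 2 ^ i = ((n : ℝ) + 2) / 2 ^ n - ((m : ℝ) + 2) / 2 ^ m := by
  induction m, h using Nat.le_induction with
  | base => simp
  | succ m hm ih =>
    rw [sum_Ioc_succ_top hm, ih, pow_succ]
    push_cast
    field_simp
    ring

theorem sum_Ioc_natCast_div_two_pow_le (n m : ℕ) :
    ∑ i ∈ Ioc n m, (i : ℝ) / 2 ^ i ≤ ((n : ℝ) + 2) / 2 ^ n := by
  rcases le_or_gt n m with h | h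
  · rw [sum_Ioc_natCast_div_two_pow h]
    exact sub_le_self _ (by positivity)
  · rw [Ioc_eq_empty_of_le h.le, sum_empty]
    positivity

theorem two_pow_sub_one_pos {i : ℕ} (hi : i ≠ 0) : (0 : ℝ) < 2 ^ i - 1 :=
  sub_pos.2 (one_lt_pow₀ (by norm_num) hi)

theorem two_mul_add_one_lt_two_pow {i : ℕ} (hi : 3 ≤ i) : 2 * i + 1 < 2 ^ i := by
  induction i, hi using Nat.le_induction with
  | base => norm_num
  | succ i hi ih => rw [pow_succ]; omega

namespace HammingTower

noncomputable def factor (i : ℕ) : ℝ := ((2 : ℝ) ^ i - 2 * i - 1) / ((2 : ℝ) ^ i - 1)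

theorem factor_pos {i : ℕ} (hi : 3 ≤ i) : 0 < factor i := by
  have h : ((2 * i + 1 : ℕ) : ℝ) < ((2 ^ i : ℕ) : ℝ) := by
    exact_mod_cast two_mul_add_one_lt_two_pow hi
  push_cast at h
  exact div_pos (by linarith) (two_pow_sub_one_pos (by omega))

theorem one_sub_factor {i : ℕ} (hi : i ≠ 0) : 1 - factor i = 2 * i / (2 ^ i - 1) := by
  have := (two_pow_sub_one_pos hi).ne'
  rw [factor]
  field_simp
  ring

theorem factor_lt_one {i : ℕ} (hi : i ≠ 0) : factor i < 1 := by
  have : 0 < 1 - factor i := by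
    rw [one_sub_factor hi]
    exact div_pos (by positivity) (two_pow_sub_one_pos hi)
  linarith

theorem one_sub_factor_le {i : ℕ} (hi : i ≠ 0) : 1 - factor i ≤ 4 * ((i : ℝ) / 2 ^ i) := by
  have hden := two_pow_sub_one_pos hi
  have h2 : (2 : ℝ) ≤ 2 ^ i := le_self_pow₀ (by norm_num) hi
  rw [one_sub_factor hi, mul_div_assoc', div_le_div_iff₀ hden (by positivity)]
  -- `4 i (2^i - 1) - 2 i 2^i = 2 i (2^i - 2)`
  nlinarith [(Nat.cast_nonneg i : (0 : ℝ) ≤ i)]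

theorem one_sub_le_prod_Ioc_factor {n : ℕ} (hn : 2 ≤ n) (m : ℕ) :
    1 - 4 * (((n : ℝ) + 2) / 2 ^ n) ≤ ∏ i ∈ Ioc n m, factor i := by
  have hsum : ∑ i ∈ Ioc n m, (1 - factor i) ≤ 4 * (((n : ℝ) + 2) / 2 ^ n) :=
    calc ∑ i ∈ Ioc n m, (1 - factor i) ≤ ∑ i ∈ Ioc n m, 4 * ((i : ℝ) / 2 ^ i) :=
          sum_le_sum fun i hi => one_sub_factor_le (by grind)
      _ ≤ 4 * (((n : ℝ) + 2) / 2 ^ n) := by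
          rw [← mul_sum]
          gcongr
          exact sum_Ioc_natCast_div_two_pow_le n m
  calc 1 - 4 * (((n : ℝ) + 2) / 2 ^ n) ≤ 1 - ∑ i ∈ Ioc n m, (1 - factor i) := by linarith
    _ ≤ ∏ i ∈ Ioc n m, (1 - (1 - factor i)) := by
        refine one_sub_sum_le_prod_one_sub _ _ (fun i hi => ?_) (fun i hi => ?_)
        · linarith [factor_lt_one (by grind : i ≠ 0)]
        · linarith [factor_pos (by grind : 3 ≤ i)]
    _ = ∏ i ∈ Ioc n m, factor i := by simp only [sub_sub_cancel]

end HammingTower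

open HammingTower

theorem hammingTowerRate_eq_prod_Ioc (m : ℕ) :
    hammingTowerRate m = ∏ i ∈ Ioc 3 m, factor i := by
  rw [hammingTowerRate, ← Icc_add_one_left_eq_Ioc]
  rfl

theorem hammingTowerRate_eq_mul_prod_Ioc {n m : ℕ} (hn : 3 ≤ n) (h : n ≤ m) :
    hammingTowerRate m = hammingTowerRate n * ∏ i ∈ Ioc n m, factor i := by
  simp only [hammingTowerRate_eq_prod_Ioc, prod_Ioc_consecutive _ hn h]

theorem hammingTowerRate_succ {m : ℕ} (hm : 3 ≤ m) :
    hammingTowerRate (m + 1) = hammingTowerRate m * factor (m + 1) := by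
  simp only [hammingTowerRate_eq_prod_Ioc, prod_Ioc_succ_top hm]

theorem hammingTowerRate_pos (m : ℕ) : 0 < hammingTowerRate m := by
  rw [hammingTowerRate_eq_prod_Ioc]
  exact prod_pos fun i hi => factor_pos (mem_Ioc.1 hi).1.le

theorem hammingTowerRate_succ_lt {m : ℕ} (hm : 3 ≤ m) :
    hammingTowerRate (m + 1) < hammingTowerRate m := by
  rw [hammingTowerRate_succ hm]
  exact mul_lt_of_lt_one_right (hammingTowerRate_pos m) (factor_lt_one m.succ_ne_zero)

theorem hammingTowerRate_antitone : Antitone hammingTowerRate := by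
  refine antitone_nat_of_succ_le fun m => ?_
  rcases le_or_gt 3 m with hm | hm
  · exact (hammingTowerRate_succ_lt hm).le
  · simp only [hammingTowerRate_eq_prod_Ioc, Ioc_eq_empty_of_le (by omega : m + 1 ≤ 3),
      Ioc_eq_empty_of_le hm.le, le_refl]

theorem hammingTowerRate_strictAntiOn : StrictAntiOn hammingTowerRate (Set.Ici 3) :=
  fun _ ha _ _ hab => (hammingTowerRate_antitone hab).trans_lt (hammingTowerRate_succ_lt ha)

theorem hammingTowerRate_mul_one_sub_le {n : ℕ} (hn : 3 ≤ n) (m : ℕ) :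
    hammingTowerRate n * (1 - 4 * (((n : ℝ) + 2) / 2 ^ n)) ≤ hammingTowerRate m := by
  have hPn := (hammingTowerRate_pos n).le
  rcases le_or_gt n m with h | h
  · rw [hammingTowerRate_eq_mul_prod_Ioc hn h]
    exact mul_le_mul_of_nonneg_left (one_sub_le_prod_Ioc_factor (by omega) m) hPn
  · calc hammingTowerRate n * (1 - 4 * (((n : ℝ) + 2) / 2 ^ n)) ≤ hammingTowerRate n :=
          mul_le_of_le_one_right hPn (sub_le_self 1 (by positivity))
      _ ≤ hammingTowerRate m := hammingTowerRate_antitone h.le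

theorem hammingTowerRate_eleven_lt : hammingTowerRate 11 < 0.20 := by
  rw [hammingTowerRate, show Icc 4 11 = {4, 5, 6, 7, 8, 9, 10, 11} from rfl]
  norm_num

theorem lt_hammingTowerRate_twelve_mul :
    0.19 < hammingTowerRate 12 * (1 - 4 * (((12 : ℕ) + 2) / 2 ^ 12)) := by
  rw [hammingTowerRate, show Icc 4 12 = {4, 5, 6, 7, 8, 9, 10, 11, 12} from rfl]
  norm_num

/-- The sequence `P_m`, defined for `m ≥ 4`, is strictly decreasing and converges
as `m → ∞` to a limit `L` with `0.19 < L < 0.20`. -/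
theorem hammingTowerRate_strictAnti_and_tendsto :
    StrictAntiOn hammingTowerRate (Set.Ici 4) ∧
    ∃ L : ℝ, Filter.Tendsto hammingTowerRate Filter.atTop (nhds L) ∧
      0.19 < L ∧ L < 0.20 := by
  have hbdd : BddBelow (Set.range hammingTowerRate) :=
    ⟨0, Set.forall_mem_range.2 fun m => (hammingTowerRate_pos m).le⟩
  have hlim := tendsto_atTop_ciInf hammingTowerRate_antitone hbdd
  refine ⟨hammingTowerRate_strictAntiOn.mono (Set.Ici_subset_Ici.2 (by norm_num)), _, hlim, ?_, ?_⟩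
  · calc (0.19 : ℝ) < hammingTowerRate 12 * (1 - 4 * (((12 : ℕ) + 2) / 2 ^ 12)) :=
          lt_hammingTowerRate_twelve_mul
      _ ≤ ⨅ m, hammingTowerRate m := le_ciInf (hammingTowerRate_mul_one_sub_le (by norm_num))
  · exact (hammingTowerRate_antitone.le_of_tendsto hlim 11).trans_lt hammingTowerRate_eleven_lt
end

section
/- Define sequences of positive integers by n_0 = 45, n_{m+1} = 2·(2^{m+5} − 1)·n_m, and k_0 = 7, k_{m+1} = 2·(2^{m+5} − 2(m+5) − 1)·(k_m − 1), for m ≥ 0. Then for every m ≥ 0, 20·k_m > n_m. -/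
/-- Block length of the level-`m` code `C_m`: `n_0 = 45`, `n_{m+1} = 2·(2^{m+5} − 1)·n_m`. -/
def towerBlockLength : ℕ → ℕ
  | 0 => 45
  | m + 1 => 2 * (2 ^ (m + 5) - 1) * towerBlockLength m

/-- Number of logical qubits of the level-`m` code `C_m`:
`k_0 = 7`, `k_{m+1} = 2·(2^{m+5} − 2(m+5) − 1)·(k_m − 1)`. -/
def towerLogicalQubits : ℕ → ℕ
  | 0 => 7
  | m + 1 => 2 * (2 ^ (m + 5) - 2 * (m + 5) - 1) * (towerLogicalQubits m - 1)

/-!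
From `m = 3` on, the rate carries a vanishing safety margin: `20 k_m / n_m ≥ 1 + (3m + 18) / 2^(m+4)`.
Going from level `m` to `m + 1` multiplies `20 k / n` by `(1 - (2m + 10)/(2^(m+5) - 1)) (1 - 1/k_m)`;
since `2^(m+4)` outgrows every polynomial in `m` and `n_m ≥ 80 · 2^(m+4)`, that loss is less than
what halving the margin frees up, so the bound propagates. The levels `m < 3` are checked directly.
-/

lemma lt_of_mul_add_le_mul {α : Type*} [Semiring α] [LinearOrder α] [IsStrictOrderedRing α]
    {a b c d : α} (ha : 0 < a) (hc : 0 < c) (hd : 0 < d) (h : a * (d + c) ≤ b * d) : a < b :=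
  lt_of_mul_lt_mul_right ((mul_lt_mul_of_pos_left (lt_add_of_pos_right d hc) ha).trans_le h) hd.le

lemma sixteen_mul_succ_le_two_pow (m : ℕ) : 16 * (m + 1) ≤ 2 ^ (m + 4) := by
  have := Nat.lt_two_pow_self (n := m)
  rw [pow_add]
  omega

lemma intCast_towerBlockLength_succ (m : ℕ) :
    (towerBlockLength (m + 1) : ℤ) = 2 * (2 * 2 ^ (m + 4) - 1) * towerBlockLength m := by
  have h : 1 ≤ 2 ^ (m + 5) := Nat.one_le_two_pow
  rw [towerBlockLength]
  push_cast [Nat.cast_sub h]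
  ring

lemma intCast_towerLogicalQubits_succ (m : ℕ) (hk : 1 ≤ towerLogicalQubits m) :
    (towerLogicalQubits (m + 1) : ℤ) =
      2 * (2 * 2 ^ (m + 4) - 2 * m - 11) * (towerLogicalQubits m - 1) := by
  have := sixteen_mul_succ_le_two_pow m
  have h : 2 * (m + 5) + 1 ≤ 2 ^ (m + 5) := by rw [pow_succ]; omega
  rw [towerLogicalQubits, Nat.sub_sub]
  push_cast [Nat.cast_sub h, Nat.cast_sub hk]
  ring

lemma tower_rate_bound_step {m Q n k : ℤ} (hm : 3 ≤ m) (hQ : 16 * (m + 1) ≤ Q) (hn : 80 * Q ≤ n)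
    (h : n * (Q + 3 * m + 18) ≤ 20 * k * Q) :
    2 * (2 * Q - 1) * n * (2 * Q + 3 * (m + 1) + 18) ≤
      20 * (2 * (2 * Q - 2 * m - 11) * (k - 1)) * (2 * Q) := by
  have hB : Q ≤ 2 * m * Q + 10 * Q - 12 * m ^ 2 - 135 * m - 375 := by nlinarith
  have ha : 0 ≤ 2 * Q - 2 * m - 11 := by linarith
  -- After multiplying `h` by `4 (2Q - 2m - 11)` it remains to see
  -- `80 Q (2Q - 2m - 11) ≤ 2 n (2mQ + 10Q - 12m² - 135m - 375)`, which `hn` and `hB` give.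
  nlinarith [mul_le_mul_of_nonneg_left h ha, mul_le_mul hn hB (by linarith) (by linarith)]

lemma eighty_mul_two_pow_le_towerBlockLength {m : ℕ} (hm : 3 ≤ m) :
    80 * 2 ^ (m + 4) ≤ towerBlockLength m := by
  induction m, hm using Nat.le_induction with
  | base => norm_num [towerBlockLength]
  | succ m _ ih =>
    have h : 1 ≤ 2 ^ (m + 5) - 1 := by
      have := sixteen_mul_succ_le_two_pow m
      rw [pow_succ]
      omega
    calc 80 * 2 ^ (m + 1 + 4) = 2 * 1 * (80 * 2 ^ (m + 4)) := by ring
      _ ≤ 2 * (2 ^ (m + 5) - 1) * towerBlockLength m := by gcongr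

lemma towerBlockLength_lt_of_mul_le {m : ℕ} (hm : 3 ≤ m)
    (h : (towerBlockLength m : ℤ) * (2 ^ (m + 4) + 3 * m + 18) ≤
      20 * towerLogicalQubits m * 2 ^ (m + 4)) :
    (towerBlockLength m : ℤ) < 20 * towerLogicalQubits m := by
  have hn : (0 : ℤ) < towerBlockLength m := by
    have := eighty_mul_two_pow_le_towerBlockLength hm
    have : 0 < 2 ^ (m + 4) := Nat.two_pow_pos _
    omega
  rw [add_assoc] at h
  exact lt_of_mul_add_le_mul hn (by positivity) (by positivity) h

lemma towerBlockLength_mul_le {m : ℕ} (hm : 3 ≤ m) :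
    (towerBlockLength m : ℤ) * (2 ^ (m + 4) + 3 * m + 18) ≤
      20 * towerLogicalQubits m * 2 ^ (m + 4) := by
  induction m, hm using Nat.le_induction with
  | base => norm_num [towerBlockLength, towerLogicalQubits]
  | succ m hm ih =>
    have hk : 1 ≤ towerLogicalQubits m := by
      have := towerBlockLength_lt_of_mul_le hm ih
      omega
    rw [intCast_towerBlockLength_succ, intCast_towerLogicalQubits_succ m hk,
      show (2 : ℤ) ^ (m + 1 + 4) = 2 * 2 ^ (m + 4) by ring]
    push_cast
    refine tower_rate_bound_step (by exact_mod_cast hm) ?_ ?_ ih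
    · exact_mod_cast sixteen_mul_succ_le_two_pow m
    · exact_mod_cast eighty_mul_two_pow_le_towerBlockLength hm

/-- The coding rate `k_m/n_m` of every code in the tower exceeds `1/20`:
for every `m ≥ 0`, `20·k_m > n_m`. -/
theorem towerRate_gt_one_twentieth (m : ℕ) :
    20 * towerLogicalQubits m > towerBlockLength m := by
  rcases lt_or_ge m 3 with hm | hm
  · interval_cases m <;> norm_num [towerBlockLength, towerLogicalQubits]
  · exact_mod_cast towerBlockLength_lt_of_mul_le hm (towerBlockLength_mul_le hm)
end

section
/- Define sequences of positive integers by n_0 = 45, n_{m+1} = 2·(2^{m+5} − 1)·n_m, and k_0 = 7, k_{m+1} = 2·(2^{m+5} − 2(m+5) − 1)·(k_m − 1), for m ≥ 0. Then the sequence of rates r_m = k_m/n_m is strictly decreasing and converges as m → ∞ to a limit lying strictly between 1/20 and 3/50. -/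
/-- The coding rate of the level-`m` code, `r_m = k_m / n_m`, as a real number. -/
noncomputable def towerRate (m : ℕ) : ℝ :=
  (towerLogicalQubits m : ℝ) / (towerBlockLength m : ℝ)

lemma tower_pow_ge (m : ℕ) : 2 * m + 32 ≤ 2 ^ (m + 5) := by
  induction m with
  | zero => norm_num
  | succ m ih =>
    have : 2 ^ (m + 1 + 5) = 2 * 2 ^ (m + 5) := by ring
    omega

lemma tower_n_ge (m : ℕ) : 45 * 2 ^ m ≤ towerBlockLength m := by
  induction m with
  | zero => simp [towerBlockLength]
  | succ m ih =>
    have h := tower_pow_ge m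
    have h1 : 2 * 1 ≤ 2 * (2 ^ (m + 5) - 1) := by omega
    calc 45 * 2 ^ (m + 1) = 2 * 1 * (45 * 2 ^ m) := by ring
    _ ≤ 2 * (2 ^ (m + 5) - 1) * towerBlockLength m := Nat.mul_le_mul h1 ih
    _ = towerBlockLength (m + 1) := rfl

lemma tower_n_pos (m : ℕ) : 0 < towerBlockLength m :=
  lt_of_lt_of_le (by positivity) (tower_n_ge m)

lemma tower_k_ge (m : ℕ) : 7 ≤ towerLogicalQubits m := by
  induction m with
  | zero => simp [towerLogicalQubits]
  | succ m ih =>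
    have h := tower_pow_ge m
    have h1 : 21 ≤ 2 ^ (m + 5) - 2 * (m + 5) - 1 := by omega
    have h2 : 21 * 6 ≤ (2 ^ (m + 5) - 2 * (m + 5) - 1) * (towerLogicalQubits m - 1) :=
      Nat.mul_le_mul h1 (by omega)
    show 7 ≤ 2 * (2 ^ (m + 5) - 2 * (m + 5) - 1) * (towerLogicalQubits m - 1)
    rw [mul_assoc]
    omega

/-- Casts of the recursion into ℝ. -/
lemma tower_cast (m : ℕ) :
    (towerBlockLength (m + 1) : ℝ) = 2 * ((2:ℝ) ^ (m + 5) - 1) * towerBlockLength m ∧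
    (towerLogicalQubits (m + 1) : ℝ) =
      2 * ((2:ℝ) ^ (m + 5) - (2 * m + 11)) * ((towerLogicalQubits m : ℝ) - 1) := by
  have hp := tower_pow_ge m
  have hk := tower_k_ge m
  have h1 : ((2 ^ (m + 5) - 1 : ℕ) : ℝ) = (2:ℝ) ^ (m + 5) - 1 := by
    push_cast [Nat.cast_sub (by omega : 1 ≤ 2 ^ (m + 5))]; ring
  have h2 : ((2 ^ (m + 5) - 2 * (m + 5) - 1 : ℕ) : ℝ) = (2:ℝ) ^ (m + 5) - (2 * m + 11) := by
    have he : 2 ^ (m + 5) - 2 * (m + 5) - 1 = 2 ^ (m + 5) - (2 * m + 11) := by omega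
    rw [he, Nat.cast_sub (by omega)]
    push_cast; ring
  constructor
  · show ((2 * (2 ^ (m + 5) - 1) * towerBlockLength m : ℕ) : ℝ) = _
    push_cast [h1]; ring
  · show ((2 * (2 ^ (m + 5) - 2 * (m + 5) - 1) * (towerLogicalQubits m - 1) : ℕ) : ℝ) = _
    rw [Nat.cast_mul, Nat.cast_mul, Nat.cast_sub (by omega : 1 ≤ towerLogicalQubits m), h2]
    push_cast; ring

lemma towerRate_strictAnti : StrictAnti towerRate := by
  apply strictAnti_nat_of_succ_lt
  intro m
  obtain ⟨hn, hkc⟩ := tower_cast m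
  have hp := tower_pow_ge m
  set N : ℝ := (towerBlockLength m : ℝ) with hNdef
  set K : ℝ := (towerLogicalQubits m : ℝ) with hKdef
  have hN : (0:ℝ) < N := by rw [hNdef]; exact_mod_cast tower_n_pos m
  have hK : (7:ℝ) ≤ K := by rw [hKdef]; exact_mod_cast tower_k_ge m
  have hP : ((2:ℝ) * m + 32) ≤ 2 ^ (m + 5) := by exact_mod_cast hp
  have hM : (0:ℝ) ≤ (m:ℝ) := Nat.cast_nonneg m
  have hA : (0:ℝ) < (2:ℝ) ^ (m + 5) - 1 := by nlinarith
  rw [towerRate, towerRate, hn, hkc, ← hNdef, ← hKdef]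
  rw [div_lt_div_iff₀ (mul_pos (mul_pos two_pos hA) hN) hN]
  have hcore : ((2:ℝ) ^ (m + 5) - (2 * m + 11)) * (K - 1) < ((2:ℝ) ^ (m + 5) - 1) * K := by
    nlinarith [mul_nonneg hM (by linarith : (0:ℝ) ≤ K)]
  nlinarith [mul_lt_mul_of_pos_right hcore hN]

lemma towerRate_le (m : ℕ) : towerRate m ≤ 7 / 45 := by
  have h0 : towerRate 0 = 7 / 45 := by norm_num [towerRate, towerLogicalQubits, towerBlockLength]
  calc towerRate m ≤ towerRate 0 := towerRate_strictAnti.antitone (Nat.zero_le m)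
  _ = 7 / 45 := h0

/-- one-step drop bound -/
lemma towerRate_drop (m : ℕ) :
    towerRate m - towerRate (m + 1) ≤ ((m:ℝ) + 7) / (6 * 2 ^ (m + 3)) := by
  obtain ⟨hn, hkc⟩ := tower_cast m
  have hp := tower_pow_ge m
  set N : ℝ := (towerBlockLength m : ℝ) with hNdef
  set K : ℝ := (towerLogicalQubits m : ℝ) with hKdef
  have hN : (0:ℝ) < N := by rw [hNdef]; exact_mod_cast tower_n_pos m
  have hNge : 45 * (2:ℝ) ^ m ≤ N := by
    rw [hNdef]
    have := tower_n_ge m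
    exact_mod_cast this
  have hK : (7:ℝ) ≤ K := by rw [hKdef]; exact_mod_cast tower_k_ge m
  have hP : ((2:ℝ) * m + 32) ≤ 2 ^ (m + 5) := by exact_mod_cast hp
  have hM : (0:ℝ) ≤ (m:ℝ) := Nat.cast_nonneg m
  have hKN : K ≤ 7 / 45 * N := by
    have := towerRate_le m
    rw [towerRate, ← hNdef, ← hKdef, div_le_iff₀ hN] at this
    linarith
  have hPm : (0:ℝ) < (2:ℝ) ^ m := by positivity
  have hPm1 : (1:ℝ) ≤ (2:ℝ) ^ m := by exact_mod_cast Nat.one_le_two_pow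
  have h5 : (2:ℝ) ^ (m + 5) = 32 * 2 ^ m := by ring
  have h3 : (2:ℝ) ^ (m + 3) = 8 * 2 ^ m := by ring
  have hA : (0:ℝ) < (2:ℝ) ^ (m + 5) - 1 := by nlinarith
  rw [towerRate, towerRate, hn, hkc, ← hNdef, ← hKdef]
  have heq : K / N - 2 * ((2:ℝ) ^ (m + 5) - (2 * m + 11)) * (K - 1) /
      (2 * ((2:ℝ) ^ (m + 5) - 1) * N) =
      ((2 * m + 10) * K + ((2:ℝ) ^ (m + 5) - (2 * m + 11))) / (((2:ℝ) ^ (m + 5) - 1) * N) := by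
    field_simp
    ring
  rw [heq, div_le_div_iff₀ (mul_pos hA hN) (by positivity)]
  rw [h5] at *
  rw [h3]
  nlinarith [mul_le_mul_of_nonneg_left (mul_le_mul_of_nonneg_right
      (show 16 * (2:ℝ) ^ m ≤ 32 * 2 ^ m - 1 by nlinarith) hN.le)
      (show (0:ℝ) ≤ (m:ℝ) + 7 by linarith),
    mul_le_mul_of_nonneg_left hKN
      (show (0:ℝ) ≤ (2 * (m:ℝ) + 10) * (48 * 2 ^ m) by positivity),
    mul_le_mul_of_nonneg_left hNge
      (show (0:ℝ) ≤ ((16 * (m:ℝ) + 560) / 15) * 2 ^ m by positivity),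
    mul_nonneg hM hPm.le, mul_nonneg (mul_nonneg hM hPm.le) hPm.le]

lemma towerRate_lb : ∀ j : ℕ, 53 / 1000 + (((8 + j : ℕ):ℝ) + 8) / (6 * 2 ^ (8 + j + 2))
    ≤ towerRate (8 + j) := by
  intro j
  induction j with
  | zero =>
    have hk8 : towerLogicalQubits 8 = 180379490146882461534558 := by
      norm_num [towerLogicalQubits]
    have hn8 : towerBlockLength 8 = 3192764650273612526112000 := by
      norm_num [towerBlockLength]
    rw [towerRate, hk8, hn8]
    norm_num
  | succ j ih =>
    have hd := towerRate_drop (8 + j)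
    have harith : (((8 + j + 1 : ℕ):ℝ) + 8) / (6 * 2 ^ (8 + j + 1 + 2)) =
        (((8 + j : ℕ):ℝ) + 8) / (6 * 2 ^ (8 + j + 2)) -
        (((8 + j : ℕ):ℝ) + 7) / (6 * 2 ^ (8 + j + 3)) := by
      have h1 : (2:ℝ) ^ (8 + j + 1 + 2) = 2 * 2 ^ (8 + j + 2) := by ring
      have h2 : (2:ℝ) ^ (8 + j + 3) = 2 * 2 ^ (8 + j + 2) := by ring
      rw [h1]
      have hp : (0:ℝ) < (2:ℝ) ^ (8 + j + 2) := by positivity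
      field_simp
      push_cast
      ring
    have hgoal : 8 + (j + 1) = 8 + j + 1 := by omega
    rw [hgoal, harith]
    linarith

/-- The sequence of rates `r_m = k_m/n_m` is strictly decreasing and converges as
`m → ∞` to a limit lying strictly between `1/20` and `3/50`. -/
theorem towerRate_strictAnti_and_tendsto :
    StrictAnti towerRate ∧
    ∃ L : ℝ, Filter.Tendsto towerRate Filter.atTop (nhds L) ∧
      1 / 20 < L ∧ L < 3 / 50 := by
  have hanti := towerRate_strictAnti
  have hlb : ∀ m, (53 / 1000 : ℝ) ≤ towerRate m := by
    intro m
    rcases le_or_gt m 8 with h | h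
    · calc (53 / 1000 : ℝ) ≤ 53 / 1000 + (((8 + 0 : ℕ):ℝ) + 8) / (6 * 2 ^ (8 + 0 + 2)) := by
            have : (0:ℝ) ≤ (((8 + 0 : ℕ):ℝ) + 8) / (6 * 2 ^ (8 + 0 + 2)) := by positivity
            linarith
      _ ≤ towerRate (8 + 0) := towerRate_lb 0
      _ ≤ towerRate m := hanti.antitone (by omega)
    · obtain ⟨j, rfl⟩ : ∃ j, m = 8 + j := ⟨m - 8, by omega⟩
      calc (53 / 1000 : ℝ) ≤ 53 / 1000 + (((8 + j : ℕ):ℝ) + 8) / (6 * 2 ^ (8 + j + 2)) := by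
            have : (0:ℝ) ≤ (((8 + j : ℕ):ℝ) + 8) / (6 * 2 ^ (8 + j + 2)) := by positivity
            linarith
      _ ≤ towerRate (8 + j) := towerRate_lb j
  have hbdd : BddBelow (Set.range towerRate) := by
    refine ⟨53 / 1000, ?_⟩
    rintro x ⟨m, rfl⟩
    exact hlb m
  refine ⟨hanti, ⨅ m, towerRate m, tendsto_atTop_ciInf hanti.antitone hbdd, ?_, ?_⟩
  · calc (1/20 : ℝ) < 53 / 1000 := by norm_num
    _ ≤ ⨅ m, towerRate m := le_ciInf hlb
  · have h8 : towerRate 8 < 3 / 50 := by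
      have hk8 : towerLogicalQubits 8 = 180379490146882461534558 := by
        norm_num [towerLogicalQubits]
      have hn8 : towerBlockLength 8 = 3192764650273612526112000 := by
        norm_num [towerBlockLength]
      rw [towerRate, hk8, hn8]
      norm_num
    calc (⨅ m, towerRate m) ≤ towerRate 8 := ciInf_le hbdd 8
    _ < 3 / 50 := h8
end

section
/- Define sequences of positive integers by n_0 = 45, n_{m+1} = 2·(2^{m+5} − 1)·n_m, and k_0 = 7, k_{m+1} = 2·(2^{m+5} − 2(m+5) − 1)·(k_m − 1), for m ≥ 0. Then there exists a constant C > 0 such that for every m ≥ 1, 2·(m+5)·k_{m−1} ≤ C·n_m·m·2^{−m}. -/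
lemma tower_k_le_n (m : ℕ) : towerLogicalQubits m ≤ towerBlockLength m := by
  induction m with
  | zero => simp [towerLogicalQubits, towerBlockLength]
  | succ m ih =>
    simp only [towerLogicalQubits, towerBlockLength]
    have h1 : 2 ^ (m + 5) - 2 * (m + 5) - 1 ≤ 2 ^ (m + 5) - 1 := by omega
    have h2 : towerLogicalQubits m - 1 ≤ towerBlockLength m := le_trans (Nat.sub_le _ _) ih
    calc 2 * (2 ^ (m + 5) - 2 * (m + 5) - 1) * (towerLogicalQubits m - 1)
        ≤ 2 * (2 ^ (m + 5) - 1) * towerBlockLength m := by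
          exact Nat.mul_le_mul (Nat.mul_le_mul_left _ h1) h2
            
lemma tower_n_growth (m : ℕ) : 2 ^ (m + 5) * towerBlockLength m ≤ towerBlockLength (m + 1) := by
  simp only [towerBlockLength]
  have : (2 : ℕ) ^ (m + 5) ≤ 2 * (2 ^ (m + 5) - 1) := by
    have : (2 : ℕ) ≤ 2 ^ (m + 5) := by
      calc (2:ℕ) = 2 ^ 1 := rfl
      _ ≤ 2 ^ (m + 5) := Nat.pow_le_pow_right (by norm_num) (by omega)
    omega
  exact Nat.mul_le_mul_right _ this

lemma tower_key (s : ℕ) :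
    2 * (s + 1 + 5) * towerLogicalQubits s * 2 ^ (s + 1) ≤
      towerBlockLength (s + 1) * (s + 1) := by
  have hk := tower_k_le_n s
  have hn := tower_n_growth s
  calc 2 * (s + 1 + 5) * towerLogicalQubits s * 2 ^ (s + 1)
      ≤ 16 * (s + 1) * towerLogicalQubits s * 2 ^ (s + 1) := by
        have : 2 * (s + 1 + 5) ≤ 16 * (s + 1) := by omega
        exact Nat.mul_le_mul_right _ (Nat.mul_le_mul_right _ this)
    _ = (2 ^ (s + 5) * towerLogicalQubits s) * (s + 1) := by ring
    _ ≤ (2 ^ (s + 5) * towerBlockLength s) * (s + 1) := by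
        exact Nat.mul_le_mul_right _ (Nat.mul_le_mul_left _ hk)
    _ ≤ towerBlockLength (s + 1) * (s + 1) := Nat.mul_le_mul_right _ hn

/-- The number of outer stabilizers of `C_m` is `O(n_m · m · 2^{−m})`:
there exists `C > 0` such that for every `m ≥ 1`,
`2·(m+5)·k_{m−1} ≤ C·n_m·m·2^{−m}`. -/
theorem towerOuterStabilizers_bound :
    ∃ C : ℝ, 0 < C ∧
      ∀ m : ℕ, 1 ≤ m →
        (2 * (m + 5) * towerLogicalQubits (m - 1) : ℝ) ≤
          C * (towerBlockLength m : ℝ) * (m : ℝ) * (2 : ℝ) ^ (-(m : ℤ)) := by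
  refine ⟨1, one_pos, ?_⟩
  intro m hm
  obtain ⟨s, rfl⟩ : ∃ s, m = s + 1 := ⟨m - 1, by omega⟩
  have key := tower_key s
  have hcast : ((2 * (s + 1 + 5) * towerLogicalQubits s * 2 ^ (s + 1) : ℕ) : ℝ) ≤
      ((towerBlockLength (s + 1) * (s + 1) : ℕ) : ℝ) := by exact_mod_cast key
  push_cast at hcast
  have hpow : (0 : ℝ) < (2 : ℝ) ^ (s + 1) := by positivity
  rw [zpow_neg, zpow_natCast]
  rw [one_mul, ← div_eq_mul_inv, le_div_iff₀ hpow]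
  simp only [Nat.add_sub_cancel]
  push_cast
  nlinarith [hcast]
end

section
/- Let c ∈ (0, 1), K ≥ 0, d ≥ 1 be reals, and let r* be a natural number such that K·(r+1)^d ≤ (2 − 2^c)·2^{c·r} for every integer r ≥ r*. Let (p_r)_{r ≥ r*} be a sequence of nonnegative reals satisfying p_{r+1} ≤ 2^{K·(r+1)^d}·p_r² for all r ≥ r*, and suppose p_{r*} ≤ 2^{−2^{c·r*}}. Then p_r ≤ 2^{−2^{c·r}} for all r ≥ r*. -/
/-- Threshold recursion: if `p_r` (the probability that a given `r`-rectangle is Bad)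
is nonnegative, satisfies `p_{r+1} ≤ 2^{K·(r+1)^d}·p_r²` for `r ≥ r*`, the growth
comparison `K·(r+1)^d ≤ (2 − 2^c)·2^{c·r}` holds for `r ≥ r*`, and the base case
`p_{r*} ≤ 2^{−2^{c·r*}}` holds, then `p_r ≤ 2^{−2^{c·r}}` for all `r ≥ r*`. -/
theorem threshold_recursion
    (c K d : ℝ) (hc0 : 0 < c) (hc1 : c < 1) (hK : 0 ≤ K) (hd : 1 ≤ d)
    (rstar : ℕ)
    (hgrowth : ∀ r : ℕ, rstar ≤ r →
      K * ((r : ℝ) + 1) ^ d ≤ (2 - (2 : ℝ) ^ c) * (2 : ℝ) ^ (c * (r : ℝ)))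
    (p : ℕ → ℝ)
    (hp0 : ∀ r : ℕ, rstar ≤ r → 0 ≤ p r)
    (hrec : ∀ r : ℕ, rstar ≤ r →
      p (r + 1) ≤ (2 : ℝ) ^ (K * ((r : ℝ) + 1) ^ d) * (p r) ^ 2)
    (hbase : p rstar ≤ (2 : ℝ) ^ (-(2 : ℝ) ^ (c * (rstar : ℝ)))) :
    ∀ r : ℕ, rstar ≤ r → p r ≤ (2 : ℝ) ^ (-(2 : ℝ) ^ (c * (r : ℝ))) := by
  intro r hr
  induction r, hr using Nat.le_induction with
  | base => exact hbase
  | succ r hr ih =>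
    have h2 : (0:ℝ) < 2 := by norm_num
    have hsq : (p r) ^ 2 ≤ ((2 : ℝ) ^ (-(2 : ℝ) ^ (c * (r : ℝ)))) ^ 2 := by
      have := hp0 r hr
      nlinarith [ih]
    have h1 : p (r + 1) ≤ (2 : ℝ) ^ (K * ((r : ℝ) + 1) ^ d) *
        ((2 : ℝ) ^ (-(2 : ℝ) ^ (c * (r : ℝ)))) ^ 2 := by
      calc p (r + 1) ≤ (2 : ℝ) ^ (K * ((r : ℝ) + 1) ^ d) * (p r) ^ 2 := hrec r hr
        _ ≤ _ := by
          apply mul_le_mul_of_nonneg_left hsq (Real.rpow_nonneg (by norm_num) _)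
    have hrw : (2 : ℝ) ^ (K * ((r : ℝ) + 1) ^ d) *
        ((2 : ℝ) ^ (-(2 : ℝ) ^ (c * (r : ℝ)))) ^ 2
        = (2 : ℝ) ^ (K * ((r : ℝ) + 1) ^ d + (-(2 : ℝ) ^ (c * (r : ℝ))) * 2) := by
      rw [← Real.rpow_natCast ((2:ℝ) ^ (-(2 : ℝ) ^ (c * (r : ℝ)))) 2,
        ← Real.rpow_mul (by norm_num), ← Real.rpow_add h2]
      norm_num
    have hexp : K * ((r : ℝ) + 1) ^ d + (-(2 : ℝ) ^ (c * (r : ℝ))) * 2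
        ≤ -(2 : ℝ) ^ (c * ((r : ℝ) + 1)) := by
      have hg := hgrowth r hr
      have hsplit : (2 : ℝ) ^ (c * ((r : ℝ) + 1)) =
          (2 : ℝ) ^ c * (2 : ℝ) ^ (c * (r : ℝ)) := by
        rw [← Real.rpow_add h2]; ring_nf
      nlinarith [hg, hsplit]
    calc p (r + 1) ≤ _ := h1
      _ = _ := hrw
      _ ≤ (2 : ℝ) ^ (-(2 : ℝ) ^ (c * ((r : ℝ) + 1))) :=
        Real.rpow_le_rpow_of_exponent_le (by norm_num) hexp
      _ = _ := by push_cast; ring_nf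
end
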